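/- arXiv:2509.03910 — 4 statements merged into one kernel-verified Lean document; each statement's English description precedes it below -/
import Mathlib

section
/- Let Ž(x,y) = (Ž₁(x), Ž₂(x,y)) be an invertible lower-triangular map and Ĥ(x,y) = (Ĥ₁(x,y), Ĥ₂(y)) an invertible upper-triangular map on ℝⁿ × ℝᵐ, both pushing forward μ_X ⊗ μ_Y to the same joint measure μ_{U,F}. Define F_like(y;u) = Ž₂(Ž₁⁻¹(u), y), F_post(x;f) = Ĥ₁(x, Ĥ₂⁻¹(f)), and R(x,f) = (F_post(x;f), F_like⁻¹(f; F_post(x;f))). Then R pushes forward μ_X ⊗ ((Ĥ₂)_# μ_Y) to ((Ž₁)_# μ_X) ⊗ μ_Y, i.e., R_#(μ_X ⊗ μ_F) = μ_U ⊗ μ_Y where μ_U, μ_F are the marginals of μ_{U,F}. -/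
/-!
Write `Ĥ(x, y) = (H₁(x, y), H₂ y)`, `Ž(x, y) = (Z₁ x, Z₂(x, y))` and `g(u, f) = (u, G₂(u, f))`.
Since `H₂⁻¹ ∘ H₂ = id`, precomposing `R` with `id × H₂` gives `g ∘ Ĥ`; since `G₂` inverts `Ž`
in its second coordinate, `g ∘ Ž = Z₁ × id`. Hence, using `Ĥ_# = Ž_#` on `μ_X ⊗ μ_Y`,
`R_#(μ_X ⊗ (H₂)_# μ_Y) = g_# Ĥ_#(μ_X ⊗ μ_Y) = g_# Ž_#(μ_X ⊗ μ_Y) = (Z₁ × id)_#(μ_X ⊗ μ_Y)`,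
which is `(Z₁)_# μ_X ⊗ μ_Y`.
-/

open MeasureTheory

namespace MeasureTheory.Measure

variable {α α' β β' γ : Type*} [MeasurableSpace α] [MeasurableSpace α'] [MeasurableSpace β]
  [MeasurableSpace β'] [MeasurableSpace γ]

lemma map_map_lowerTriangular_of_leftInverse_snd {Z₁ : α → α'} {Z₂ : α × β → β'}
    {G₂ : α' × β' → β}
    (hZ₁ : Measurable Z₁) (hZ₂ : Measurable Z₂) (hG₂ : Measurable G₂)
    (hG : ∀ z, G₂ (Z₁ z.1, Z₂ z) = z.2) (μ : Measure (α × β)) :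
    (μ.map fun p => (Z₁ p.1, Z₂ p)).map (fun w => (w.1, G₂ w)) =
      μ.map (Prod.map Z₁ id) := by
  rw [map_map (by fun_prop) (by fun_prop)]
  congr 1
  funext z
  exact Prod.ext rfl (hG z)

lemma map_map_prodMap_id_eq_map_map_upperTriangular {H₁ : α × β → α'} {H₂ : β → γ}
    {H₂inv : γ → β} {G₂ : α' × γ → β'} {R : α × γ → α' × β'}
    (hH₁ : Measurable H₁) (hH₂ : Measurable H₂) (hH₂inv : Measurable H₂inv)
    (hG₂ : Measurable G₂) (hH₂li : Function.LeftInverse H₂inv H₂)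
    (hR : ∀ x f, R (x, f) = (H₁ (x, H₂inv f), G₂ (H₁ (x, H₂inv f), f)))
    (μ : Measure (α × β)) :
    (μ.map (Prod.map id H₂)).map R =
      (μ.map fun p => (H₁ p, H₂ p.2)).map fun w => (w.1, G₂ w) := by
  have hR_eq : R = fun p => (H₁ (p.1, H₂inv p.2), G₂ (H₁ (p.1, H₂inv p.2), p.2)) := by
    funext ⟨x, f⟩
    exact hR x f
  have hR_meas : Measurable R := by rw [hR_eq]; fun_prop
  rw [map_map hR_meas (by fun_prop), map_map (by fun_prop) (by fun_prop)]
  congr 1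
  funext ⟨x, y⟩
  simp [hR, hH₂li y]

end MeasureTheory.Measure

theorem stmt_5_general {n m : ℕ}
    (μX : Measure (Fin n → ℝ)) (μY : Measure (Fin m → ℝ))
    [IsProbabilityMeasure μX] [IsProbabilityMeasure μY]
    -- lower-triangular map Ž and its inverse
    (Z₁ : (Fin n → ℝ) → (Fin n → ℝ)) (Z₁inv : (Fin n → ℝ) → (Fin n → ℝ))
    (Z₂ : (Fin n → ℝ) × (Fin m → ℝ) → (Fin m → ℝ))
    (G₂ : (Fin n → ℝ) × (Fin m → ℝ) → (Fin m → ℝ))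
    (hZ₁ : Measurable Z₁) (hZ₂ : Measurable Z₂)
    (hG₂ : Measurable G₂)
    (hZinv₁ : ∀ z : (Fin n → ℝ) × (Fin m → ℝ),
      (Z₁inv (Z₁ z.1, Z₂ z).1, G₂ (Z₁ z.1, Z₂ z)) = z)
    -- upper-triangular map Ĥ and its inverse component
    (H₁ : (Fin n → ℝ) × (Fin m → ℝ) → (Fin n → ℝ))
    (H₂ : (Fin m → ℝ) → (Fin m → ℝ)) (H₂inv : (Fin m → ℝ) → (Fin m → ℝ))
    (hH₁ : Measurable H₁) (hH₂ : Measurable H₂) (hH₂inv : Measurable H₂inv)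
    (hH₂li : ∀ y, H₂inv (H₂ y) = y)
    -- both represent the same joint measure
    (μUF : Measure ((Fin n → ℝ) × (Fin m → ℝ)))
    (hpushZ : μUF = Measure.map (fun p => (Z₁ p.1, Z₂ p)) (μX.prod μY))
    (hpushH : μUF = Measure.map (fun p => (H₁ p, H₂ p.2)) (μX.prod μY))
    -- the combined map R built from F_post(x;f) = H₁(x, H₂⁻¹ f) and F_like⁻¹(f;u) = G₂(u,f)
    (R : (Fin n → ℝ) × (Fin m → ℝ) → (Fin n → ℝ) × (Fin m → ℝ))
    (hR : ∀ x f, R (x, f) = (H₁ (x, H₂inv f), G₂ (H₁ (x, H₂inv f), f))) :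
    Measure.map R (μX.prod (μY.map H₂)) = (μX.map Z₁).prod μY := by
  calc (μX.prod (μY.map H₂)).map R
      = ((μX.prod μY).map (Prod.map id H₂)).map R := by
        rw [← Measure.map_prod_map _ _ measurable_id hH₂, Measure.map_id]
    _ = ((μX.prod μY).map fun p => (H₁ p, H₂ p.2)).map fun w => (w.1, G₂ w) :=
        Measure.map_map_prodMap_id_eq_map_map_upperTriangular hH₁ hH₂ hH₂inv hG₂ hH₂li hR
          _
    _ = ((μX.prod μY).map fun p => (Z₁ p.1, Z₂ p)).map fun w => (w.1, G₂ w) := by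
        rw [← hpushH, hpushZ]
    _ = (μX.prod μY).map (Prod.map Z₁ id) :=
        Measure.map_map_lowerTriangular_of_leftInverse_snd hZ₁ hZ₂ hG₂
          (fun z => congrArg Prod.snd (hZinv₁ z)) _
    _ = (μX.map Z₁).prod μY := by
        rw [← Measure.map_prod_map _ _ hZ₁ measurable_id, Measure.map_id]

/-- Theorem 1(iii): With `Ž` lower-triangular and `Ĥ` upper-triangular, both
invertible and pushing `μ_X ⊗ μ_Y` to `μ_{U,F}`, the combined map
`R(x,f) = (F_post(x;f), F_like⁻¹(f; F_post(x;f)))` pushes `μ_X ⊗ μ_F` to `μ_U ⊗ μ_Y`,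
where `μ_U = (Ž₁)_# μ_X` and `μ_F = (Ĥ₂)_# μ_Y`. -/
theorem stmt_5 {n m : ℕ}
    (μX : Measure (Fin n → ℝ)) (μY : Measure (Fin m → ℝ))
    [IsProbabilityMeasure μX] [IsProbabilityMeasure μY]
    -- lower-triangular map Ž and its inverse
    (Z₁ : (Fin n → ℝ) → (Fin n → ℝ)) (Z₁inv : (Fin n → ℝ) → (Fin n → ℝ))
    (Z₂ : (Fin n → ℝ) × (Fin m → ℝ) → (Fin m → ℝ))
    (G₂ : (Fin n → ℝ) × (Fin m → ℝ) → (Fin m → ℝ))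
    (hZ₁ : Measurable Z₁) (hZ₁inv : Measurable Z₁inv) (hZ₂ : Measurable Z₂)
    (hG₂ : Measurable G₂)
    (hZ₁li : ∀ x, Z₁inv (Z₁ x) = x) (hZ₁ri : ∀ u, Z₁ (Z₁inv u) = u)
    (hZinv₁ : ∀ z : (Fin n → ℝ) × (Fin m → ℝ),
      (Z₁inv (Z₁ z.1, Z₂ z).1, G₂ (Z₁ z.1, Z₂ z)) = z)
    (hZinv₂ : ∀ w : (Fin n → ℝ) × (Fin m → ℝ),
      (Z₁ (Z₁inv w.1), Z₂ (Z₁inv w.1, G₂ w)) = w)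
    -- upper-triangular map Ĥ and its inverse component
    (H₁ : (Fin n → ℝ) × (Fin m → ℝ) → (Fin n → ℝ))
    (H₂ : (Fin m → ℝ) → (Fin m → ℝ)) (H₂inv : (Fin m → ℝ) → (Fin m → ℝ))
    (hH₁ : Measurable H₁) (hH₂ : Measurable H₂) (hH₂inv : Measurable H₂inv)
    (hH₂li : ∀ y, H₂inv (H₂ y) = y) (hH₂ri : ∀ f, H₂ (H₂inv f) = f)
    (hHbij : Function.Bijective (fun p : (Fin n → ℝ) × (Fin m → ℝ) => (H₁ p, H₂ p.2)))
    -- both represent the same joint measure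
    (μUF : Measure ((Fin n → ℝ) × (Fin m → ℝ)))
    (hpushZ : μUF = Measure.map (fun p => (Z₁ p.1, Z₂ p)) (μX.prod μY))
    (hpushH : μUF = Measure.map (fun p => (H₁ p, H₂ p.2)) (μX.prod μY))
    -- the combined map R built from F_post(x;f) = H₁(x, H₂⁻¹ f) and F_like⁻¹(f;u) = G₂(u,f)
    (R : (Fin n → ℝ) × (Fin m → ℝ) → (Fin n → ℝ) × (Fin m → ℝ))
    (hR : ∀ x f, R (x, f) = (H₁ (x, H₂inv f), G₂ (H₁ (x, H₂inv f), f))) :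
    Measure.map R (μX.prod (μY.map H₂)) = (μX.map Z₁).prod μY :=
  stmt_5_general μX μY Z₁ Z₁inv Z₂ G₂ hZ₁ hZ₂ hG₂ hZinv₁ H₁ H₂ H₂inv hH₁ hH₂ hH₂inv hH₂li μUF hpushZ
    hpushH R hR
end

section
/- With the setup of the combined map R(x,f) = (F_post(x;f), F_like⁻¹(f; F_post(x;f))) built from lower- and upper-triangular maps Ž, Ĥ both pushing μ_X ⊗ μ_Y to μ_{U,F}: the mixture over x ∼ μ_X of the pushforwards of μ_F under f ↦ R₂(x,f) equals μ_Y. Precisely, for every bounded measurable φ : ℝᵐ → ℝ, ∫_{ℝⁿ} ∫_{ℝᵐ} φ(F_like⁻¹(f; F_post(x;f))) dμ_F(f) dμ_X(x) = ∫ φ dμ_Y. -/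
/-!
Push `μ_X ⊗ μ_Y` forward along `(x, y) ↦ G₂ (Ĥ (x, y))`, where `G₂` is the second component of
`Ž⁻¹`. Since `Ĥ` and `Ž` push `μ_X ⊗ μ_Y` to the same measure `μ_{U,F}`, this equals the pushforward
along `G₂ ∘ Ž = Prod.snd`, i.e. `μ_Y`. The left-hand side of the theorem is the integral of `φ`
against that pushforward: substitute `f = Ĥ₂ y` in the inner integral and apply Fubini.
-/

open MeasureTheory

section

variable {α β γ : Type*} [MeasurableSpace α] [MeasurableSpace β] [MeasurableSpace γ]
  {μ : Measure α} {ν : Measure β}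

theorem Measure.map_prod_comp_eq_of_map_eq [IsProbabilityMeasure μ] [SFinite ν]
    {T S : α × β → γ} {G : γ → β} (hT : Measurable T) (hS : Measurable S) (hG : Measurable G)
    (hmap : (μ.prod ν).map T = (μ.prod ν).map S) (hGS : ∀ p, G (S p) = p.2) :
    (μ.prod ν).map (G ∘ T) = ν := by
  have hGS' : G ∘ S = Prod.snd := funext hGS
  rw [← Measure.map_map hG hT, hmap, Measure.map_map hG hS, hGS', Measure.map_snd_prod,
    measure_univ, one_smul]

theorem integral_integral_eq_integral_map [IsFiniteMeasure μ] [IsFiniteMeasure ν]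
    {ψ : α × β → γ} (hψ : Measurable ψ) {φ : γ → ℝ} (hφ : Measurable φ)
    (hbd : ∃ C, ∀ z, |φ z| ≤ C) :
    ∫ x, ∫ y, φ (ψ (x, y)) ∂ν ∂μ = ∫ z, φ z ∂((μ.prod ν).map ψ) := by
  obtain ⟨C, hC⟩ := hbd
  have hint : Integrable (φ ∘ ψ) (μ.prod ν) :=
    .of_bound (hφ.comp hψ).aestronglyMeasurable C (.of_forall fun p => hC (ψ p))
  rw [integral_map hψ.aemeasurable hφ.aestronglyMeasurable]
  exact (integral_prod _ hint).symm

end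

theorem stmt_6_general {n m : ℕ}
    (μX : Measure (Fin n → ℝ)) (μY : Measure (Fin m → ℝ))
    [IsProbabilityMeasure μX] [IsProbabilityMeasure μY]
    -- lower-triangular map Ž and its inverse
    (Z₁ : (Fin n → ℝ) → (Fin n → ℝ)) (Z₁inv : (Fin n → ℝ) → (Fin n → ℝ))
    (Z₂ : (Fin n → ℝ) × (Fin m → ℝ) → (Fin m → ℝ))
    (G₂ : (Fin n → ℝ) × (Fin m → ℝ) → (Fin m → ℝ))
    (hZ₁ : Measurable Z₁) (hZ₂ : Measurable Z₂)
    (hG₂ : Measurable G₂)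
    (hZinv₁ : ∀ z : (Fin n → ℝ) × (Fin m → ℝ),
      (Z₁inv (Z₁ z.1, Z₂ z).1, G₂ (Z₁ z.1, Z₂ z)) = z)
    -- upper-triangular map Ĥ and its inverse component
    (H₁ : (Fin n → ℝ) × (Fin m → ℝ) → (Fin n → ℝ))
    (H₂ : (Fin m → ℝ) → (Fin m → ℝ)) (H₂inv : (Fin m → ℝ) → (Fin m → ℝ))
    (hH₁ : Measurable H₁) (hH₂ : Measurable H₂) (hH₂inv : Measurable H₂inv)
    (hH₂li : ∀ y, H₂inv (H₂ y) = y)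
    -- both represent the same joint measure
    (μUF : Measure ((Fin n → ℝ) × (Fin m → ℝ)))
    (hpushZ : μUF = Measure.map (fun p => (Z₁ p.1, Z₂ p)) (μX.prod μY))
    (hpushH : μUF = Measure.map (fun p => (H₁ p, H₂ p.2)) (μX.prod μY))
    (φ : (Fin m → ℝ) → ℝ) (hφ : Measurable φ) (hbd : ∃ C, ∀ y, |φ y| ≤ C) :
    ∫ x, ∫ f, φ (G₂ (H₁ (x, H₂inv f), f)) ∂(μY.map H₂) ∂μX = ∫ y, φ y ∂μY := by
  have hH : Measurable fun p : (Fin n → ℝ) × (Fin m → ℝ) => (H₁ p, H₂ p.2) := by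
    fun_prop
  have hZ : Measurable fun p : (Fin n → ℝ) × (Fin m → ℝ) => (Z₁ p.1, Z₂ p) := by
    fun_prop
  calc ∫ x, ∫ f, φ (G₂ (H₁ (x, H₂inv f), f)) ∂(μY.map H₂) ∂μX
      = ∫ x, ∫ y, φ (G₂ (H₁ (x, y), H₂ y)) ∂μY ∂μX := by
        congr 1 with x
        rw [integral_map hH₂.aemeasurable (Measurable.aestronglyMeasurable (by fun_prop))]
        simp only [hH₂li]
    _ = ∫ y, φ y ∂((μX.prod μY).map (G₂ ∘ fun p => (H₁ p, H₂ p.2))) :=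
        integral_integral_eq_integral_map (hG₂.comp hH) hφ hbd
    _ = ∫ y, φ y ∂μY := by
        rw [Measure.map_prod_comp_eq_of_map_eq hH hZ hG₂ (hpushH.symm.trans hpushZ)
          fun p => congrArg Prod.snd (hZinv₁ p)]

/-- Theorem 2(i): In the setup of Theorem 1, the mixture over `x ∼ μ_X` of the
pushforwards of `μ_F` under `f ↦ R₂(x,f) = F_like⁻¹(f; F_post(x;f))` equals `μ_Y`. -/
theorem stmt_6 {n m : ℕ}
    (μX : Measure (Fin n → ℝ)) (μY : Measure (Fin m → ℝ))
    [IsProbabilityMeasure μX] [IsProbabilityMeasure μY]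
    -- lower-triangular map Ž and its inverse
    (Z₁ : (Fin n → ℝ) → (Fin n → ℝ)) (Z₁inv : (Fin n → ℝ) → (Fin n → ℝ))
    (Z₂ : (Fin n → ℝ) × (Fin m → ℝ) → (Fin m → ℝ))
    (G₂ : (Fin n → ℝ) × (Fin m → ℝ) → (Fin m → ℝ))
    (hZ₁ : Measurable Z₁) (hZ₁inv : Measurable Z₁inv) (hZ₂ : Measurable Z₂)
    (hG₂ : Measurable G₂)
    (hZ₁li : ∀ x, Z₁inv (Z₁ x) = x) (hZ₁ri : ∀ u, Z₁ (Z₁inv u) = u)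
    (hZinv₁ : ∀ z : (Fin n → ℝ) × (Fin m → ℝ),
      (Z₁inv (Z₁ z.1, Z₂ z).1, G₂ (Z₁ z.1, Z₂ z)) = z)
    (hZinv₂ : ∀ w : (Fin n → ℝ) × (Fin m → ℝ),
      (Z₁ (Z₁inv w.1), Z₂ (Z₁inv w.1, G₂ w)) = w)
    -- upper-triangular map Ĥ and its inverse component
    (H₁ : (Fin n → ℝ) × (Fin m → ℝ) → (Fin n → ℝ))
    (H₂ : (Fin m → ℝ) → (Fin m → ℝ)) (H₂inv : (Fin m → ℝ) → (Fin m → ℝ))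
    (hH₁ : Measurable H₁) (hH₂ : Measurable H₂) (hH₂inv : Measurable H₂inv)
    (hH₂li : ∀ y, H₂inv (H₂ y) = y) (hH₂ri : ∀ f, H₂ (H₂inv f) = f)
    (hHbij : Function.Bijective (fun p : (Fin n → ℝ) × (Fin m → ℝ) => (H₁ p, H₂ p.2)))
    -- both represent the same joint measure
    (μUF : Measure ((Fin n → ℝ) × (Fin m → ℝ)))
    (hpushZ : μUF = Measure.map (fun p => (Z₁ p.1, Z₂ p)) (μX.prod μY))
    (hpushH : μUF = Measure.map (fun p => (H₁ p, H₂ p.2)) (μX.prod μY))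
    (φ : (Fin m → ℝ) → ℝ) (hφ : Measurable φ) (hbd : ∃ C, ∀ y, |φ y| ≤ C) :
    ∫ x, ∫ f, φ (G₂ (H₁ (x, H₂inv f), f)) ∂(μY.map H₂) ∂μX = ∫ y, φ y ∂μY :=
  stmt_6_general μX μY Z₁ Z₁inv Z₂ G₂ hZ₁ hZ₂ hG₂ hZinv₁ H₁ H₂ H₂inv hH₁ hH₂ hH₂inv hH₂li μUF hpushZ
    hpushH φ hφ hbd
end

section
/- Let S : ℝⁿ × ℝᵐ → ℝⁿ × ℝᵐ be a bijection with inverse R, and suppose (i) the map (u,y) ↦ (u, S₂(u,y)) pushes μ_U ⊗ μ_Y forward to μ_{U,F} (loss J₁(S)=0), and (ii) S pushes μ_U ⊗ μ_Y forward to μ_X ⊗ μ_F (loss J₃(S)=0). Then the map (x,f) ↦ (R₁(x,f), f) pushes μ_X ⊗ μ_F forward to μ_{U,F} (loss J₂(R)=0). -/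
open MeasureTheory

theorem stmt_7_general {n m : ℕ}
    (μU μX : Measure (Fin n → ℝ)) (μY μF : Measure (Fin m → ℝ))
    (μUF : Measure ((Fin n → ℝ) × (Fin m → ℝ)))
    (S R : (Fin n → ℝ) × (Fin m → ℝ) → (Fin n → ℝ) × (Fin m → ℝ))
    (hS : Measurable S) (hR : Measurable R)
    (hRS : ∀ z, R (S z) = z)
    (hJ₁ : Measure.map (fun p : (Fin n → ℝ) × (Fin m → ℝ) => (p.1, (S p).2)) (μU.prod μY)
            = μUF)
    (hJ₃ : Measure.map S (μU.prod μY) = μX.prod μF) :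
    Measure.map (fun p : (Fin n → ℝ) × (Fin m → ℝ) => ((R p).1, p.2)) (μX.prod μF)
      = μUF := by
  have hcomp : (fun p : (Fin n → ℝ) × (Fin m → ℝ) => ((R p).1, p.2)) ∘ S
      = fun p => (p.1, (S p).2) := by
    funext z
    simp only [Function.comp_apply, hRS z]
  rw [← hJ₃, Measure.map_map (hR.fst.prodMk measurable_snd) hS, hcomp, hJ₁]

/-- Theorem 4(ii): If `S` is a bijection with inverse `R`, `J₁(S)=0`
(i.e. `(u,y) ↦ (u, S₂(u,y))` pushes `μ_U ⊗ μ_Y` to `μ_{U,F}`) and `J₃(S)=0`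
(i.e. `S` pushes `μ_U ⊗ μ_Y` to `μ_X ⊗ μ_F`), then `J₂(R)=0`
(i.e. `(x,f) ↦ (R₁(x,f), f)` pushes `μ_X ⊗ μ_F` to `μ_{U,F}`). -/
theorem stmt_7 {n m : ℕ}
    (μU μX : Measure (Fin n → ℝ)) (μY μF : Measure (Fin m → ℝ))
    [IsProbabilityMeasure μU] [IsProbabilityMeasure μX]
    [IsProbabilityMeasure μY] [IsProbabilityMeasure μF]
    (μUF : Measure ((Fin n → ℝ) × (Fin m → ℝ))) [IsProbabilityMeasure μUF]
    (hmargU : μUF.map Prod.fst = μU) (hmargF : μUF.map Prod.snd = μF)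
    (S R : (Fin n → ℝ) × (Fin m → ℝ) → (Fin n → ℝ) × (Fin m → ℝ))
    (hS : Measurable S) (hR : Measurable R)
    (hRS : ∀ z, R (S z) = z) (hSR : ∀ z, S (R z) = z)
    (hJ₁ : Measure.map (fun p : (Fin n → ℝ) × (Fin m → ℝ) => (p.1, (S p).2)) (μU.prod μY)
            = μUF)
    (hJ₃ : Measure.map S (μU.prod μY) = μX.prod μF) :
    Measure.map (fun p : (Fin n → ℝ) × (Fin m → ℝ) => ((R p).1, p.2)) (μX.prod μF)
      = μUF :=
  stmt_7_general μU μX μY μF μUF S R hS hR hRS hJ₁ hJ₃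
end

section
/- Let ν be a probability measure on ℝⁿ × ℝᵐ with first marginal μ_U, and let S₂ : ℝⁿ × ℝᵐ → ℝᵐ be measurable. If the pushforward of μ_U ⊗ μ_Y under (u,y) ↦ (u, S₂(u,y)) equals ν, then for μ_U-almost every u, the measure (S₂(u,·))_# μ_Y is a version of the conditional distribution of the second coordinate given the first coordinate equals u under ν. -/
open MeasureTheory ProbabilityTheory

/-!
If `ν` is the law of `(U, S₂(U, Y))` with `U ~ μ_U` independent of `Y ~ μ_Y`, then `ν` is also
the composition-product of `μ_U` with the kernel `u ↦ (S₂(u,·))_# μ_Y`. A disintegration of `ν`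
along its first coordinate is unique up to `μ_U`-null sets, so any other disintegrating kernel
agrees with this one `μ_U`-almost everywhere.
-/

namespace ProbabilityTheory.Kernel

variable {α β γ : Type*} [MeasurableSpace α] [MeasurableSpace β] [MeasurableSpace γ]

/-- The kernel `u ↦ (f(u,·))_# ξ`: the law of `f(u, Y)` for a noise `Y ~ ξ`. -/
noncomputable def randomMap (ξ : Measure β) (f : α × β → γ) : Kernel α γ :=
  (Kernel.id ×ₖ Kernel.const α ξ).map f

instance (ξ : Measure β) [SFinite ξ] (f : α × β → γ) :
    IsSFiniteKernel (randomMap ξ f) := by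
  unfold randomMap; infer_instance

instance (ξ : Measure β) [IsFiniteMeasure ξ] (f : α × β → γ) :
    IsFiniteKernel (randomMap ξ f) := by
  unfold randomMap; infer_instance

lemma randomMap_apply (ξ : Measure β) [SFinite ξ] {f : α × β → γ} (hf : Measurable f) (u : α) :
    randomMap ξ f u = ξ.map (fun y => f (u, y)) := by
  rw [randomMap, map_apply _ hf, prod_apply, id_apply, const_apply, Measure.dirac_prod,
    Measure.map_map hf measurable_prodMk_left]
  rfl

lemma compProd_randomMap (μ : Measure α) [SFinite μ] (ξ : Measure β) [SFinite ξ]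
    {f : α × β → γ} (hf : Measurable f) :
    μ ⊗ₘ randomMap ξ f = (μ.prod ξ).map (fun p => (p.1, f p)) := by
  have hgraph : Measurable (fun p : α × β => (p.1, f p)) := measurable_fst.prodMk hf
  ext s hs
  rw [Measure.compProd_apply hs, Measure.map_apply hgraph hs, Measure.prod_apply (hgraph hs)]
  congr 1 with u
  rw [randomMap_apply ξ hf, Measure.map_apply (by fun_prop) (measurable_prodMk_left hs)]
  rfl

lemma ae_eq_randomMap_of_map_prod_eq_compProd [MeasurableSpace.CountableOrCountablyGenerated α γ]
    {μ : Measure α} [IsFiniteMeasure μ] {ξ : Measure β} [IsFiniteMeasure ξ]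
    {f : α × β → γ} (hf : Measurable f) {κ : Kernel α γ} [IsFiniteKernel κ]
    (h : (μ.prod ξ).map (fun p => (p.1, f p)) = μ ⊗ₘ κ) :
    ∀ᵐ u ∂μ, κ u = ξ.map (fun y => f (u, y)) := by
  have hκ : κ =ᵐ[μ] randomMap ξ f :=
    ae_eq_of_compProd_eq (h.symm.trans (compProd_randomMap μ ξ hf).symm)
  filter_upwards [hκ] with u hu
  rw [hu, randomMap_apply ξ hf]

end ProbabilityTheory.Kernel

theorem stmt_9_general {n m : ℕ}
    (μU : Measure (Fin n → ℝ)) (μY : Measure (Fin m → ℝ))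
    [IsProbabilityMeasure μU] [IsProbabilityMeasure μY]
    (ν : Measure ((Fin n → ℝ) × (Fin m → ℝ)))
    (S₂ : (Fin n → ℝ) × (Fin m → ℝ) → (Fin m → ℝ)) (hS₂ : Measurable S₂)
    (hpush : Measure.map (fun p : (Fin n → ℝ) × (Fin m → ℝ) => (p.1, S₂ p)) (μU.prod μY)
              = ν)
    (κ : Kernel (Fin n → ℝ) (Fin m → ℝ)) [IsMarkovKernel κ]
    (hκ : ν = μU.compProd κ) :
    ∀ᵐ u ∂μU, κ u = Measure.map (fun y => S₂ (u, y)) μY :=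
  Kernel.ae_eq_randomMap_of_map_prod_eq_compProd hS₂ (hpush.trans hκ)

/-- Corollary 1(i): If `ν` on `ℝⁿ × ℝᵐ` has first marginal `μ_U` and the
pushforward of `μ_U ⊗ μ_Y` under `(u,y) ↦ (u, S₂(u,y))` equals `ν`, then for `μ_U`-a.e. `u`,
`(S₂(u,·))_# μ_Y` is a version of the conditional distribution of the second coordinate
given the first equals `u`, i.e. it agrees a.e. with any Markov kernel disintegrating `ν`. -/
theorem stmt_9 {n m : ℕ}
    (μU : Measure (Fin n → ℝ)) (μY : Measure (Fin m → ℝ))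
    [IsProbabilityMeasure μU] [IsProbabilityMeasure μY]
    (ν : Measure ((Fin n → ℝ) × (Fin m → ℝ))) [IsProbabilityMeasure ν]
    (hmarg : ν.map Prod.fst = μU)
    (S₂ : (Fin n → ℝ) × (Fin m → ℝ) → (Fin m → ℝ)) (hS₂ : Measurable S₂)
    (hpush : Measure.map (fun p : (Fin n → ℝ) × (Fin m → ℝ) => (p.1, S₂ p)) (μU.prod μY)
              = ν)
    (κ : Kernel (Fin n → ℝ) (Fin m → ℝ)) [IsMarkovKernel κ]
    (hκ : ν = μU.compProd κ) :
    ∀ᵐ u ∂μU, κ u = Measure.map (fun y => S₂ (u, y)) μY :=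
  stmt_9_general μU μY ν S₂ hS₂ hpush κ hκ
end
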